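/- Let α > 0, β > 0 and a, b ∈ ℝ. Then ∫_0^∞ Φ(a√v + b) · (β^α / Γ(α)) v^{α−1} e^{−β v} dv = P( (Z − b) / √(W/(2α)) ≤ a √(α/β) ), where Z and W are independent random variables with Z standard normal and W Gamma-distributed with shape α and rate 1/2 (i.e., chi-square with 2α degrees of freedom), so that (Z − b)/√(W/(2α)) is a noncentral Student-t random variable with 2α degrees of freedom and noncentrality parameter −b. -/

import Mathlib

/-!
Disintegrate the product measure along `W`: for `w > 0` the slice
`{z | (z - b) / √(w / (2α)) ≤ a √(α/β)}` is `Iic (a √(w / (2β)) + b)`, of Gaussian mass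
`Φ (a √(w / (2β)) + b)`. Integrating over `W ~ Gamma(α, 1/2)` and substituting `w = 2βv`
turns the `Gamma(α, 1/2)` density into the `Gamma(α, β)` density.
-/

open MeasureTheory ProbabilityTheory Real Set

/-- The standard normal cumulative distribution function `Φ`. -/
noncomputable def stdNormCdf (x : ℝ) : ℝ :=
  ∫ t in Set.Iic x, (2 * Real.pi) ^ (-(1 : ℝ) / 2) * Real.exp (-t ^ 2 / 2)

lemma stdNormCdf_eq_toReal_gaussianReal_Iic (x : ℝ) :
    stdNormCdf x = (gaussianReal 0 1 (Iic x)).toReal := by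
  rw [gaussianReal_apply_eq_integral 0 one_ne_zero,
    ENNReal.toReal_ofReal
      (setIntegral_nonneg measurableSet_Iic fun t _ => gaussianPDFReal_nonneg 0 1 t)]
  refine setIntegral_congr_fun measurableSet_Iic fun t _ => ?_
  have h : ((2 : ℝ) * π) ^ (-(1 : ℝ) / 2) = (√(2 * π))⁻¹ := by
    rw [sqrt_eq_rpow, ← rpow_neg (by positivity)]
    norm_num
  simp [gaussianPDFReal, h]

lemma integral_gammaMeasure {a r : ℝ} (ha : 0 < a) (hr : 0 < r) (f : ℝ → ℝ) :
    ∫ x, f x ∂gammaMeasure a r = ∫ x in Ioi 0, f x * gammaPDFReal a r x := by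
  rw [gammaMeasure, integral_withDensity_eq_integral_toReal_smul
    (measurable_gammaPDFReal a r).ennreal_ofReal (f := gammaPDF a r)
    (ae_of_all _ fun _ => ENNReal.ofReal_lt_top)]
  simp only [gammaPDF, ENNReal.toReal_ofReal (gammaPDFReal_nonneg ha hr _), smul_eq_mul]
  rw [← integral_Ici_eq_integral_Ioi, ← setIntegral_eq_integral_of_forall_compl_eq_zero]
  · exact setIntegral_congr_fun measurableSet_Ici fun x _ => mul_comm _ _
  · intro x hx
    rw [gammaPDFReal, if_neg (by simpa using hx), zero_mul]

lemma mul_gammaPDFReal_mul {a r c : ℝ} (hr : 0 ≤ r) (hc : 0 < c) (x : ℝ) :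
    c * gammaPDFReal a r (c * x) = gammaPDFReal a (c * r) x := by
  rcases lt_or_ge x 0 with hx | hx
  · simp [gammaPDFReal, not_le.2 hx, not_le.2 (mul_neg_of_pos_of_neg hc hx)]
  simp only [gammaPDFReal, if_pos hx, if_pos (mul_nonneg hc.le hx)]
  rw [mul_rpow hc.le hx, mul_rpow hc.le hr]
  have hpow : c * c ^ (a - 1) = c ^ a := by
    rw [mul_comm, ← rpow_add_one hc.ne', sub_add_cancel]
  rw [← hpow]
  ring_nf

lemma integral_gammaMeasure_eq_integral_comp_mul {a r c : ℝ} (ha : 0 < a) (hr : 0 < r)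
    (hc : 0 < c) (f : ℝ → ℝ) :
    ∫ x, f x ∂gammaMeasure a r = ∫ v in Ioi 0, f (c * v) * gammaPDFReal a (c * r) v := by
  have hsubst := integral_comp_mul_left_Ioi' (fun x => f x * gammaPDFReal a r x) 0 hc
  rw [mul_zero] at hsubst
  rw [integral_gammaMeasure ha hr, ← hsubst, smul_eq_mul, ← integral_const_mul]
  refine setIntegral_congr_fun measurableSet_Ioi fun v _ => ?_
  rw [← mul_gammaPDFReal_mul hr.le hc]
  ring

lemma sub_div_sqrt_le_iff {α β a b z v : ℝ} (hα : 0 < α) (hβ : 0 < β) (hv : 0 < v) :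
    (z - b) / √(2 * β * v / (2 * α)) ≤ a * √(α / β) ↔ z ≤ a * √v + b := by
  have hpos : 0 < √(2 * β * v / (2 * α)) := sqrt_pos.2 (by positivity)
  have hprod : √(α / β) * √(2 * β * v / (2 * α)) = √v := by
    rw [← sqrt_mul (by positivity)]
    congr 1
    field_simp
  rw [div_le_iff₀ hpos, mul_assoc, hprod, sub_le_iff_le_add]

theorem stmt4 (α β a b : ℝ) (hα : 0 < α) (hβ : 0 < β) :
    ∫ v in Set.Ioi (0 : ℝ),
        stdNormCdf (a * Real.sqrt v + b) * gammaPDFReal α β v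
      = (((gaussianReal 0 1).prod (gammaMeasure α (1 / 2)))
          {zw : ℝ × ℝ | (zw.1 - b) / Real.sqrt (zw.2 / (2 * α))
            ≤ a * Real.sqrt (α / β)}).toReal := by
  have hS : MeasurableSet {zw : ℝ × ℝ | (zw.1 - b) / √(zw.2 / (2 * α)) ≤ a * √(α / β)} :=
    measurableSet_le (by fun_prop) measurable_const
  have := isProbabilityMeasure_gammaMeasure hα one_half_pos
  rw [Measure.prod_apply_symm hS,
    ← integral_toReal (measurable_measure_prodMk_right hS).aemeasurable
      (ae_of_all _ fun _ => measure_lt_top _ _),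
    integral_gammaMeasure_eq_integral_comp_mul hα one_half_pos (by positivity : 0 < 2 * β),
    show 2 * β * (1 / 2) = β by ring]
  refine setIntegral_congr_fun measurableSet_Ioi fun v (hv : 0 < v) => ?_
  have hslice : (fun z => (z, 2 * β * v)) ⁻¹'
      {zw : ℝ × ℝ | (zw.1 - b) / √(zw.2 / (2 * α)) ≤ a * √(α / β)} = Iic (a * √v + b) :=
    ext fun z => sub_div_sqrt_le_iff hα hβ hv
  rw [hslice, stdNormCdf_eq_toReal_gaussianReal_Iic]
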